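/- Let (X, 𝔅, μ, T) be an ergodic measure-preserving dynamical system, A ∈ 𝔅 with μ(A) > 0, and let (E_n) be measurable sets with μ(E_n) > 0 for all n such that μ_{E_n}({r_{E_n} < r_A}) → 0 as n → ∞. Then μ((E_n)'_A)/μ(E_n) → 1 as n → ∞, where (E_n)'_A is the shadow of E_n in A. -/

import Mathlib

open MeasureTheory Filter Set ProbabilityTheory
open scoped ENNReal Topology ENat

noncomputable section

variable {X : Type*}

/-- The instant of the `i`-th visit (after time `0`) of the orbit of `x` under `T` to `B`,
with the convention that `hitInstant T B x 0 = 0` and the value is `⊤` if there is no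
such visit. -/
def hitInstant (T : X → X) (B : Set X) (x : X) : ℕ → ℕ∞
  | 0 => 0
  | (i+1) => sInf {m : ℕ∞ | ∃ n : ℕ, hitInstant T B x i < (n : ℕ∞) ∧ T^[n] x ∈ B ∧ m = (n : ℕ∞)}

/-- The first hitting time `r_B(x) = inf {k ≥ 1 : T^k x ∈ B}` (with value `⊤` if the orbit
never enters `B`). -/
def hitTime (T : X → X) (B : Set X) (x : X) : ℕ∞ := hitInstant T B x 1

/-- The `i`-th interarrival time (gap between the `i`-th and `(i+1)`-st visits);
`interGap T B 0 x` is the first hitting time `r_B^{(1)}(x)`, and once some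
visit fails to occur, all subsequent gaps are `⊤`. -/
def interGap (T : X → X) (B : Set X) (i : ℕ) (x : X) : ℝ≥0∞ :=
  if hitInstant T B x i = ⊤ then ⊤
  else ((hitInstant T B x (i+1) - hitInstant T B x i : ℕ∞) : ℝ≥0∞)

/-- The shadow set `E'_A = ⋃_{k ≥ 0} (A ∩ {r_A > k} ∩ T^{-k} E)` of `E` in `A`. -/
def shadow (T : X → X) (A E : Set X) : Set X :=
  ⋃ k : ℕ, A ∩ {x | (k : ℕ∞) < hitTime T A x} ∩ (T^[k]) ⁻¹' E

/-- The induced (first-return) map `T_A(x) = T^{r_A(x)}(x)` (junk value `x` if the orbit of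
`x` never returns to `A`). -/
def inducedMap (T : X → X) (A : Set X) (x : X) : X :=
  T^[sInf {n : ℕ | 1 ≤ n ∧ T^[n] x ∈ A}] x

/-- The rescaled interarrival process `c · Φ_B : x ↦ (c · r_B^{(i)}(x))_{i ≥ 1}`,
as a random element of `ℕ → ℝ≥0∞`. -/
def rescaledProcess (T : X → X) (B : Set X) (c : ℝ≥0∞) (x : X) : ℕ → ℝ≥0∞ :=
  fun i => c * interGap T B i x

/-- Convergence in distribution: the laws of the random elements `f n : X → (ℕ → ℝ≥0∞)`
under the measures `P n` converge weakly to `ν` (tested against bounded continuous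
real functions, with `ℕ → ℝ≥0∞` carrying the product topology). -/
def ConvInDist [MeasurableSpace X] (P : ℕ → Measure X)
    (f : ℕ → X → (ℕ → ℝ≥0∞)) (ν : Measure (ℕ → ℝ≥0∞)) : Prop :=
  ∀ g : BoundedContinuousFunction (ℕ → ℝ≥0∞) ℝ,
    Tendsto (fun n => ∫ x, g (f n x) ∂(P n)) atTop (𝓝 (∫ y, g y ∂ν))

end

/-!
Cut `F` into the slices `A ∩ {r_A > m} ∩ T⁻ᵐ F`: the points of `A` whose orbit lies in `F` at
time `m`, before returning to `A`. Since `{r_A > m + 1} ∩ T⁻⁽ᵐ⁺¹⁾ F = T⁻¹ (Aᶜ ∩ {r_A > m} ∩ T⁻ᵐ F)`,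
invariance of `μ` gives `μ F = ∑_{m < n} μ (slice m) + μ ({r_A > n} ∩ T⁻ⁿ F)`, and ergodicity
makes `μ {r_A > n} → 0`; so the slices tile `F` in measure, a Kac-type formula.
The shadow of `E` is the union of the slices of `E`, hence `μ E'_A ≤ μ E`. The slices of
`E \ {r_E < r_A}` are pairwise disjoint (from time `m`, a point in the slices `m < m'` would
meet `E` again before `A`), hence `μ (E \ {r_E < r_A}) ≤ μ E'_A`. Dividing by `μ E`
squeezes the ratio between `1 - μ_E {r_E < r_A}` and `1`.
-/

section HitTime

variable {X : Type*} {T : X → X} {A : Set X}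

theorem lt_hitTime_iff {k : ℕ} {x : X} :
    (k : ℕ∞) < hitTime T A x ↔ ∀ i, 1 ≤ i → i ≤ k → T^[i] x ∉ A := by
  rw [← ENat.add_one_le_iff (ENat.natCast_ne_top k)]
  simp only [hitTime, hitInstant, le_sInf_iff, mem_ofPred_eq]
  constructor
  · rintro h i hi hik hiA
    have := h i ⟨i, by exact_mod_cast hi, hiA, rfl⟩
    exact absurd this (by norm_cast; omega)
  · rintro h _ ⟨n, hn, hnA, rfl⟩
    by_contra hlt
    exact h n (by exact_mod_cast hn) (by norm_cast at hlt ⊢; omega) hnA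

theorem hitTime_le_of_iterate_mem {n : ℕ} {x : X} (hn : 1 ≤ n) (hnA : T^[n] x ∈ A) :
    hitTime T A x ≤ n :=
  not_lt.1 fun h => lt_hitTime_iff.1 h n hn le_rfl hnA

theorem pos_hitTime (x : X) : 0 < hitTime T A x := by
  exact_mod_cast lt_hitTime_iff.2 fun i hi hi0 => absurd hi0 (by omega)

theorem setOf_succ_lt_hitTime (k : ℕ) :
    {x | ((k + 1 : ℕ) : ℕ∞) < hitTime T A x} = T ⁻¹' (Aᶜ ∩ {x | (k : ℕ∞) < hitTime T A x}) := by
  ext x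
  simp only [mem_ofPred_eq, mem_preimage, mem_inter_iff, mem_compl_iff, lt_hitTime_iff]
  constructor
  · intro h
    refine ⟨h 1 le_rfl (by omega), fun i hi hik => ?_⟩
    rw [← Function.iterate_succ_apply]
    exact h (i + 1) (by omega) (by omega)
  · rintro ⟨hTx, h⟩ i hi hik
    obtain ⟨j, rfl⟩ := Nat.exists_eq_add_of_le' hi
    rcases j.eq_zero_or_pos with rfl | hj
    · exact hTx
    · rw [Function.iterate_succ_apply]
      exact h j hj (by omega)

theorem lt_hitTime_iterate {m k : ℕ} {x : X} (h : ((m + k : ℕ) : ℕ∞) < hitTime T A x) :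
    (k : ℕ∞) < hitTime T A (T^[m] x) := by
  rw [lt_hitTime_iff] at h ⊢
  intro i hi hik
  rw [← Function.iterate_add_apply]
  exact h (i + m) (by omega) (by omega)

variable [MeasurableSpace X]

theorem measurableSet_lt_hitTime (hT : Measurable T) (hA : MeasurableSet A) (k : ℕ) :
    MeasurableSet {x | (k : ℕ∞) < hitTime T A x} := by
  induction k with
  | zero => simp [pos_hitTime]
  | succ k ih => exact setOf_succ_lt_hitTime (A := A) k ▸ (hA.compl.inter ih).preimage hT

theorem measurableSet_hitTime_eq_top (hT : Measurable T) (hA : MeasurableSet A) :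
    MeasurableSet {x | hitTime T A x = ⊤} := by
  simp only [ENat.eq_top_iff_forall_gt, ofPred_forall]
  exact .iInter fun k => measurableSet_lt_hitTime hT hA k

theorem measurableSet_hitTime_lt_hitTime {E : Set X} (hT : Measurable T) (hA : MeasurableSet A)
    (hE : MeasurableSet E) : MeasurableSet {x | hitTime T E x < hitTime T A x} := by
  have : {x | hitTime T E x < hitTime T A x} =
      ⋃ n : ℕ, {x | (n : ℕ∞) < hitTime T E x}ᶜ ∩ {x | (n : ℕ∞) < hitTime T A x} := by
    ext x
    simp only [mem_ofPred_eq, mem_iUnion, mem_inter_iff, mem_compl_iff, not_lt]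
    refine ⟨fun h => ?_, fun ⟨n, hE, hA⟩ => hE.trans_lt hA⟩
    lift hitTime T E x to ℕ using h.ne_top with n hn
    exact ⟨n, le_rfl, h⟩
  rw [this]
  exact .iUnion fun n => (measurableSet_lt_hitTime hT hE n).compl.inter
    (measurableSet_lt_hitTime hT hA n)

end HitTime

section Recurrence

variable {X : Type*} [MeasurableSpace X] {T : X → X} {A : Set X} {μ : Measure X}

/-- The set of points that never return to `A` is forward invariant, so ergodicity makes it
null or conull; conull is impossible because it misses `T ⁻¹' A`. -/
theorem Ergodic.ae_hitTime_ne_top [IsFiniteMeasure μ] (hErg : Ergodic T μ)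
    (hA : MeasurableSet A) (hA0 : μ A ≠ 0) : ∀ᵐ x ∂μ, hitTime T A x ≠ ⊤ := by
  set N := {x | hitTime T A x = ⊤}
  have hN : MeasurableSet N := measurableSet_hitTime_eq_top hErg.measurable hA
  have hNinv : N ⊆ T ⁻¹' N := fun x hx => by
    simp only [N, mem_preimage, mem_ofPred_eq, ENat.eq_top_iff_forall_gt] at hx ⊢
    exact fun k => lt_hitTime_iterate (m := 1) (by rw [add_comm]; exact hx (k + 1))
  have hNA : T ⁻¹' A ⊆ Nᶜ := fun x hxA hxN => by
    have : ((1 : ℕ) : ℕ∞) < hitTime T A x := by simp_all [N]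
    exact lt_hitTime_iff.1 this 1 le_rfl le_rfl hxA
  rcases hErg.ae_empty_or_univ_of_ae_le_preimage hN.nullMeasurableSet
      (Eventually.of_forall hNinv) with h | h
  · exact (ae_iff (μ := μ)).2 (by simpa [N] using measure_congr h)
  · have hNc : μ Nᶜ = 0 := by simpa using measure_congr h.compl
    refine absurd (measure_mono_null hNA hNc) ?_
    rwa [hErg.measure_preimage hA.nullMeasurableSet]

theorem tendsto_measure_lt_hitTime [IsFiniteMeasure μ] (hT : Measurable T)
    (hA : MeasurableSet A) (hae : ∀ᵐ x ∂μ, hitTime T A x ≠ ⊤) :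
    Tendsto (fun k : ℕ => μ {x | (k : ℕ∞) < hitTime T A x}) atTop (𝓝 0) := by
  have hanti : Antitone fun k : ℕ => {x | (k : ℕ∞) < hitTime T A x} :=
    fun j k hjk x (hx : (k : ℕ∞) < _) => (Nat.cast_le.2 hjk).trans_lt hx
  have hlim := tendsto_measure_iInter_atTop
    (fun k => (measurableSet_lt_hitTime hT hA k).nullMeasurableSet) hanti ⟨0, measure_ne_top μ _⟩
  simp only [iInter_ofPred, ← ENat.eq_top_iff_forall_gt] at hlim
  rwa [show μ {x | hitTime T A x = ⊤} = 0 by simpa using ae_iff.1 hae] at hlim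

end Recurrence

section Tower

variable {X : Type*} [MeasurableSpace X] {T : X → X} {A F : Set X} {μ : Measure X}

theorem MeasureTheory.MeasurePreserving.measure_lt_hitTime_inter_preimage_iterate
    (hT : MeasurePreserving T μ μ) (hA : MeasurableSet A) (hF : MeasurableSet F) (k : ℕ) :
    μ ({x | (k : ℕ∞) < hitTime T A x} ∩ T^[k] ⁻¹' F) =
      μ (A ∩ {x | (k : ℕ∞) < hitTime T A x} ∩ T^[k] ⁻¹' F) +
        μ ({x | ((k + 1 : ℕ) : ℕ∞) < hitTime T A x} ∩ T^[k + 1] ⁻¹' F) := by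
  set P := {x | (k : ℕ∞) < hitTime T A x} ∩ T^[k] ⁻¹' F
  have hP : MeasurableSet P :=
    (measurableSet_lt_hitTime hT.measurable hA k).inter (hF.preimage (hT.measurable.iterate k))
  have hshift : {x | ((k + 1 : ℕ) : ℕ∞) < hitTime T A x} ∩ T^[k + 1] ⁻¹' F = T ⁻¹' (P \ A) := by
    rw [setOf_succ_lt_hitTime, Function.iterate_succ, preimage_comp, ← preimage_inter]
    congr 1
    ext x
    simp only [P, mem_inter_iff, Set.mem_sdiff, mem_compl_iff]
    tauto
  rw [hshift, hT.measure_preimage (hP.diff hA).nullMeasurableSet, inter_assoc, inter_comm A,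
    measure_inter_add_sdiff _ hA]

theorem MeasureTheory.MeasurePreserving.measure_eq_sum_add_measure_lt_hitTime
    (hT : MeasurePreserving T μ μ) (hA : MeasurableSet A) (hF : MeasurableSet F) (n : ℕ) :
    μ F = ∑ m ∈ Finset.range n, μ (A ∩ {x | (m : ℕ∞) < hitTime T A x} ∩ T^[m] ⁻¹' F) +
      μ ({x | (n : ℕ∞) < hitTime T A x} ∩ T^[n] ⁻¹' F) := by
  induction n with
  | zero => simp [pos_hitTime]
  | succ n ih =>
    rw [Finset.sum_range_succ, add_assoc,
      ← hT.measure_lt_hitTime_inter_preimage_iterate hA hF n, ih]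

theorem MeasureTheory.MeasurePreserving.tsum_measure_inter_lt_hitTime_inter_preimage
    [IsFiniteMeasure μ] (hT : MeasurePreserving T μ μ) (hA : MeasurableSet A)
    (hF : MeasurableSet F) (hae : ∀ᵐ x ∂μ, hitTime T A x ≠ ⊤) :
    ∑' m : ℕ, μ (A ∩ {x | (m : ℕ∞) < hitTime T A x} ∩ T^[m] ⁻¹' F) = μ F := by
  have hrest : Tendsto (fun n : ℕ => μ ({x | (n : ℕ∞) < hitTime T A x} ∩ T^[n] ⁻¹' F))
      atTop (𝓝 0) :=
    tendsto_of_tendsto_of_tendsto_of_le_of_le tendsto_const_nhds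
      (tendsto_measure_lt_hitTime hT.measurable hA hae) (fun _ => zero_le)
      (fun _ => measure_mono inter_subset_left)
  have hlim := (ENNReal.tendsto_nat_tsum
    fun m : ℕ => μ (A ∩ {x | (m : ℕ∞) < hitTime T A x} ∩ T^[m] ⁻¹' F)).add hrest
  simp only [← hT.measure_eq_sum_add_measure_lt_hitTime hA hF, add_zero] at hlim
  exact tendsto_nhds_unique hlim tendsto_const_nhds

end Tower

section Shadow

variable {X : Type*} {T : X → X} {A E : Set X}

theorem disjoint_lt_hitTime_inter_preimage_sdiff {m m' : ℕ} (hmm' : m < m') :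
    Disjoint ({x | (m : ℕ∞) < hitTime T A x} ∩
        T^[m] ⁻¹' (E \ {x | hitTime T E x < hitTime T A x}))
      ({x | (m' : ℕ∞) < hitTime T A x} ∩ T^[m'] ⁻¹' E) := by
  obtain ⟨j, rfl⟩ := Nat.exists_eq_add_of_lt hmm'
  refine disjoint_left.2 fun x ⟨_, hxF⟩ ⟨hxr, hxE⟩ => hxF.2 ?_
  rw [mem_preimage, add_assoc, add_comm, Function.iterate_add_apply] at hxE
  calc hitTime T E (T^[m] x) ≤ ((j + 1 : ℕ) : ℕ∞) := hitTime_le_of_iterate_mem (by omega) hxE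
    _ < hitTime T A (T^[m] x) := lt_hitTime_iterate (by rwa [← add_assoc])

theorem pairwise_disjoint_inter_lt_hitTime_inter_preimage_sdiff :
    Pairwise (Function.onFun Disjoint fun m : ℕ => A ∩ {x | (m : ℕ∞) < hitTime T A x} ∩
      T^[m] ⁻¹' (E \ {x | hitTime T E x < hitTime T A x})) :=
  (pairwise_disjoint_on _).2 fun m m' hmm' => by
    refine (disjoint_lt_hitTime_inter_preimage_sdiff (T := T) (A := A) (E := E) hmm').mono ?_ ?_
      <;> rw [inter_assoc]
    · exact inter_subset_right
    · exact inter_subset_right.trans (inter_subset_inter_right _ (preimage_mono sdiff_subset))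

variable [MeasurableSpace X] {μ : Measure X} [IsFiniteMeasure μ]

theorem measure_shadow_le (hT : MeasurePreserving T μ μ) (hA : MeasurableSet A)
    (hE : MeasurableSet E) (hae : ∀ᵐ x ∂μ, hitTime T A x ≠ ⊤) : μ (shadow T A E) ≤ μ E :=
  (measure_iUnion_le _).trans_eq (hT.tsum_measure_inter_lt_hitTime_inter_preimage hA hE hae)

theorem measure_sdiff_hitTime_lt_hitTime_le_measure_shadow (hT : MeasurePreserving T μ μ)
    (hA : MeasurableSet A) (hE : MeasurableSet E) (hae : ∀ᵐ x ∂μ, hitTime T A x ≠ ⊤) :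
    μ (E \ {x | hitTime T E x < hitTime T A x}) ≤ μ (shadow T A E) := by
  have hB := measurableSet_hitTime_lt_hitTime hT.measurable hA hE
  rw [← hT.tsum_measure_inter_lt_hitTime_inter_preimage hA (hE.diff hB) hae,
    ← measure_iUnion pairwise_disjoint_inter_lt_hitTime_inter_preimage_sdiff fun m =>
      (hA.inter (measurableSet_lt_hitTime hT.measurable hA m)).inter
        ((hE.diff hB).preimage (hT.measurable.iterate m))]
  exact measure_mono (iUnion_mono fun m => inter_subset_inter_right _ (preimage_mono sdiff_subset))

theorem one_sub_cond_le_measure_shadow_div (hT : MeasurePreserving T μ μ)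
    (hA : MeasurableSet A) (hE : MeasurableSet E) (hE0 : μ E ≠ 0)
    (hae : ∀ᵐ x ∂μ, hitTime T A x ≠ ⊤) :
    1 - μ[|E] {x | hitTime T E x < hitTime T A x} ≤ μ (shadow T A E) / μ E := by
  have hB := measurableSet_hitTime_lt_hitTime hT.measurable hA hE
  have := cond_isProbabilityMeasure (μ := μ) hE0
  calc 1 - μ[|E] {x | hitTime T E x < hitTime T A x}
      = μ[|E] {x | hitTime T E x < hitTime T A x}ᶜ := (prob_compl_eq_one_sub hB).symm
    _ = (μ E)⁻¹ * μ (E \ {x | hitTime T E x < hitTime T A x}) := cond_apply hE μ _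
    _ ≤ (μ E)⁻¹ * μ (shadow T A E) := by
        gcongr (μ E)⁻¹ * ?_
        exact measure_sdiff_hitTime_lt_hitTime_le_measure_shadow hT hA hE hae
    _ = μ (shadow T A E) / μ E := ENNReal.div_eq_inv_mul.symm

end Shadow

theorem statement1_general {X : Type*} [MeasurableSpace X]
    (T : X → X) (μ : Measure X) [IsProbabilityMeasure μ] (hErg : Ergodic T μ)
    (A : Set X) (hA : MeasurableSet A) (hApos : 0 < μ A)
    (E : ℕ → Set X) (hE : ∀ n, MeasurableSet (E n)) (hEpos : ∀ n, 0 < μ (E n))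
    (h2 : Tendsto (fun n => μ[|E n] {x | hitTime T (E n) x < hitTime T A x}) atTop (𝓝 0)) :
    Tendsto (fun n => μ (shadow T A (E n)) / μ (E n)) atTop (𝓝 1) := by
  have hT := hErg.toMeasurePreserving
  have hae := hErg.ae_hitTime_ne_top hA hApos.ne'
  refine tendsto_of_tendsto_of_tendsto_of_le_of_le ?_ tendsto_const_nhds
    (fun n => one_sub_cond_le_measure_shadow_div hT hA (hE n) (hEpos n).ne' hae)
    (fun n => ENNReal.div_le_of_le_mul (by
      rw [one_mul]; exact measure_shadow_le hT hA (hE n) hae))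
  simpa using ENNReal.Tendsto.sub tendsto_const_nhds h2 (Or.inl ENNReal.one_ne_top)

/-- If `(E_n)` are sets of positive measure with
`μ_{E_n}({r_{E_n} < r_A}) → 0`, then `μ((E_n)'_A) / μ(E_n) → 1`. -/
theorem statement1 {X : Type*} [MetricSpace X] [MeasurableSpace X] [BorelSpace X]
    (T : X → X) (μ : Measure X) [IsProbabilityMeasure μ] (hErg : Ergodic T μ)
    (A : Set X) (hA : MeasurableSet A) (hApos : 0 < μ A)
    (E : ℕ → Set X) (hE : ∀ n, MeasurableSet (E n)) (hEpos : ∀ n, 0 < μ (E n))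
    (h2 : Tendsto (fun n => μ[|E n] {x | hitTime T (E n) x < hitTime T A x}) atTop (𝓝 0)) :
    Tendsto (fun n => μ (shadow T A (E n)) / μ (E n)) atTop (𝓝 1) :=
  statement1_general T μ hErg A hA hApos E hE hEpos h2
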